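/- Uniqueness for the Dirichlet problem: let 0 < α < 1, h > 0, j₀ < j₁. If u, v : ℤ → ℝ are bounded, (δ_right)^α u = (δ_right)^α v on [j₀, j₁), and u = v on [j₁, ∞), then u = v on [j₀, ∞). -/

import Mathlib

/-!
Put `w = u - v`. From `Λ^α(0) = 1`, `Λ^α(m) = -(α/m) Λ^{α-1}(m-1) ≤ 0` for `m ≥ 1` and
`∑_{m ≤ N} Λ^α(m) = Λ^{α-1}(N) ≥ 0` one gets `∑ |Λ^α(m)| ≤ 2`, so `(δ_right)^α` is linear on
bounded sequences and `(δ_right)^α w = 0` on `[j₀, j₁)`. If `w` vanishes to the right of `j`,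
then `(δ_right)^α w(j) = h^{-α} w(j)`, so `w(j) = 0`; downward induction from `j₁` concludes.
-/

open Real

/-- The generalized binomial coefficient `(α choose m) = α(α−1)⋯(α−m+1)/m!`. -/
noncomputable def rchoose (α : ℝ) (m : ℕ) : ℝ :=
  (∏ i ∈ Finset.range m, (α - i)) / (m.factorial : ℝ)

/-- The kernel `Λ^α(m) = (−1)^m (α choose m)`. -/
noncomputable def Lam (α : ℝ) (m : ℕ) : ℝ := (-1) ^ m * rchoose α m

/-- The fractional discrete derivative on the mesh `ℤ_h`:
`(δ_right)^α u(n) = h^{-α} ∑_{m=0}^∞ Λ^α(m) u(n+m)`. -/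
noncomputable def deltaRightPow (α h : ℝ) (u : ℤ → ℝ) (n : ℤ) : ℝ :=
  h ^ (-α) * ∑' m : ℕ, Lam α m * u (n + (m : ℤ))

theorem rchoose_succ (α : ℝ) (m : ℕ) : rchoose α (m + 1) = rchoose α m * (α - m) / (m + 1) := by
  rw [rchoose, rchoose, Finset.prod_range_succ, Nat.factorial_succ]
  push_cast
  field_simp

theorem rchoose_succ_eq_div_mul (α : ℝ) (m : ℕ) :
    rchoose α (m + 1) = α / (m + 1) * rchoose (α - 1) m := by
  rw [rchoose, rchoose, Finset.prod_range_succ', Nat.factorial_succ]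
  push_cast
  simp only [sub_zero, sub_sub, add_comm (1 : ℝ)]
  field_simp

theorem rchoose_pascal (α : ℝ) (m : ℕ) :
    rchoose α (m + 1) = rchoose (α - 1) (m + 1) + rchoose (α - 1) m := by
  rw [rchoose_succ_eq_div_mul, rchoose_succ]
  field_simp
  ring

theorem Lam_zero (α : ℝ) : Lam α 0 = 1 := by
  simp [Lam, rchoose]

theorem Lam_succ (α : ℝ) (m : ℕ) : Lam α (m + 1) = Lam α m * (m - α) / (m + 1) := by
  rw [Lam, Lam, rchoose_succ, pow_succ]
  ring

theorem Lam_succ_eq_neg_div_mul (α : ℝ) (m : ℕ) :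
    Lam α (m + 1) = -(α / (m + 1)) * Lam (α - 1) m := by
  rw [Lam, Lam, rchoose_succ_eq_div_mul, pow_succ]
  ring

theorem sum_range_succ_Lam (α : ℝ) (N : ℕ) :
    ∑ m ∈ Finset.range (N + 1), Lam α m = Lam (α - 1) N := by
  induction N with
  | zero => simp [Lam_zero]
  | succ N ih =>
    rw [Finset.sum_range_succ, ih, Lam, Lam, Lam, rchoose_pascal, pow_succ]
    ring

theorem Lam_nonneg_of_nonpos {β : ℝ} (hβ : β ≤ 0) (m : ℕ) : 0 ≤ Lam β m := by
  induction m with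
  | zero => simp [Lam_zero]
  | succ m ih =>
    rw [Lam_succ]
    have : 0 ≤ (m : ℝ) := m.cast_nonneg
    exact div_nonneg (mul_nonneg ih (by linarith)) (by linarith)

theorem Lam_succ_nonpos {α : ℝ} (hα₀ : 0 ≤ α) (hα₁ : α ≤ 1) (m : ℕ) : Lam α (m + 1) ≤ 0 := by
  rw [Lam_succ_eq_neg_div_mul, neg_mul]
  exact neg_nonpos.2 (mul_nonneg (by positivity) (Lam_nonneg_of_nonpos (by linarith) m))

theorem summable_abs_Lam {α : ℝ} (hα₀ : 0 ≤ α) (hα₁ : α ≤ 1) : Summable fun m ↦ |Lam α m| := by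
  refine (summable_nat_add_iff 1).1 (summable_of_sum_range_le (c := 1) (fun _ ↦ abs_nonneg _)
    fun N ↦ ?_)
  have htail : ∑ m ∈ Finset.range N, Lam α (m + 1) = Lam (α - 1) N - 1 := by
    rw [← sum_range_succ_Lam, Finset.sum_range_succ', Lam_zero, add_sub_cancel_right]
  rw [Finset.sum_congr rfl fun m _ ↦ abs_of_nonpos (Lam_succ_nonpos hα₀ hα₁ m),
    Finset.sum_neg_distrib, htail]
  linarith [Lam_nonneg_of_nonpos (show α - 1 ≤ 0 by linarith) N]

theorem summable_Lam_mul_of_bounded {α : ℝ} (hα₀ : 0 ≤ α) (hα₁ : α ≤ 1) {f : ℤ → ℝ} {C : ℝ}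
    (hf : ∀ n, |f n| ≤ C) (j : ℤ) : Summable fun m : ℕ ↦ Lam α m * f (j + m) :=
  ((summable_abs_Lam hα₀ hα₁).mul_right C).of_norm_bounded fun m ↦ by
    rw [Real.norm_eq_abs, abs_mul]
    exact mul_le_mul_of_nonneg_left (hf _) (abs_nonneg _)

theorem deltaRightPow_sub {α : ℝ} (hα₀ : 0 ≤ α) (hα₁ : α ≤ 1) (h : ℝ) {u v : ℤ → ℝ} {M : ℝ}
    (hu : ∀ n, |u n| ≤ M) (hv : ∀ n, |v n| ≤ M) (n : ℤ) :
    deltaRightPow α h (u - v) n = deltaRightPow α h u n - deltaRightPow α h v n := by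
  simp only [deltaRightPow, Pi.sub_apply, mul_sub]
  rw [(summable_Lam_mul_of_bounded hα₀ hα₁ hu n).tsum_sub
    (summable_Lam_mul_of_bounded hα₀ hα₁ hv n), mul_sub]

theorem deltaRightPow_eq_of_forall_lt_eq_zero (α h : ℝ) {w : ℤ → ℝ} {j : ℤ}
    (hw : ∀ i, j < i → w i = 0) : deltaRightPow α h w j = h ^ (-α) * w j := by
  rw [deltaRightPow, tsum_eq_single 0 fun m hm ↦ by rw [hw _ (by omega), mul_zero]]
  simp [Lam_zero]

theorem Int.forall_ge_of_downward_step {P : ℤ → Prop} {j₀ j₁ : ℤ}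
    (htail : ∀ j, j₁ ≤ j → P j) (hstep : ∀ j, j₀ ≤ j → j < j₁ → (∀ i, j < i → P i) → P j) :
    ∀ j, j₀ ≤ j → P j := by
  intro j hj
  obtain ⟨n, hn⟩ : ∃ n : ℕ, j₁ - n ≤ j := ⟨(j₁ - j).toNat, by omega⟩
  induction n generalizing j with
  | zero => exact htail j (by simpa using hn)
  | succ n ih =>
    by_cases hj₁ : j₁ ≤ j
    · exact htail j hj₁
    exact hstep j hj (by omega) fun i hi ↦ ih i (by omega) (by push_cast at hn; omega)

theorem dirichlet_uniqueness_general (α h : ℝ) (hα : 0 < α) (hα1 : α < 1) (hh : 0 < h)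
    (j₀ j₁ : ℤ) (u v : ℤ → ℝ) (M : ℝ)
    (hu : ∀ n, |u n| ≤ M) (hv : ∀ n, |v n| ≤ M)
    (hfrac : ∀ j, j₀ ≤ j → j < j₁ → deltaRightPow α h u j = deltaRightPow α h v j)
    (htail : ∀ j, j₁ ≤ j → u j = v j) :
    ∀ j, j₀ ≤ j → u j = v j := by
  refine Int.forall_ge_of_downward_step htail fun j hj₀ hj₁ hright ↦ ?_
  have hdiff := deltaRightPow_sub hα.le hα1.le h hu hv j
  rw [hfrac j hj₀ hj₁, sub_self, deltaRightPow_eq_of_forall_lt_eq_zero (w := u - v) α h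
    fun i hi ↦ sub_eq_zero.2 (hright i hi)] at hdiff
  exact sub_eq_zero.1 ((mul_eq_zero.1 hdiff).resolve_left (rpow_pos_of_pos hh _).ne')

/-- Uniqueness for the Dirichlet problem for the fractional discrete derivative. -/
theorem dirichlet_uniqueness (α h : ℝ) (hα : 0 < α) (hα1 : α < 1) (hh : 0 < h)
    (j₀ j₁ : ℤ) (hj : j₀ < j₁) (u v : ℤ → ℝ) (M : ℝ)
    (hu : ∀ n, |u n| ≤ M) (hv : ∀ n, |v n| ≤ M)
    (hfrac : ∀ j, j₀ ≤ j → j < j₁ → deltaRightPow α h u j = deltaRightPow α h v j)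
    (htail : ∀ j, j₁ ≤ j → u j = v j) :
    ∀ j, j₀ ≤ j → u j = v j :=
  dirichlet_uniqueness_general α h hα hα1 hh j₀ j₁ u v M hu hv hfrac htail
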